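/- arXiv:1902.05907 — 3 statements merged into one kernel-verified Lean document; each statement's English description precedes it below -/
import Mathlib

section
/- Fix u > 0. The space S(0,∞) is complete with respect to the K-functional K_u: if (f_n) is a sequence in S(0,∞) such that K_u(f_n − f_m) → 0 as n, m → ∞, then there exists f ∈ S(0,∞) with K_u(f_n − f) → 0 as n → ∞. -/
open MeasureTheory Filter Set
open scoped ENNReal NNReal

/-- Lebesgue measure on `(0, ∞)`. -/
noncomputable def mLeb : Measure ℝ := volume.restrict (Set.Ioi (0:ℝ))

/-- The distribution function `d_f(s) = m {t ∈ (0,∞) : |f t| > s}`. -/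
noncomputable def distFun (f : ℝ → ℝ) (s : ℝ) : ℝ≥0∞ := mLeb {t | s < |f t|}

/-- `f ∈ S(0,∞)`: `f` is measurable and `d_f(s) < ∞` for some `s > 0`. -/
def MemS (f : ℝ → ℝ) : Prop := Measurable f ∧ ∃ s > (0:ℝ), distFun f s < ⊤

/-- `‖g‖₀ = m (supp g)`, the `L₀`-group-norm. -/
noncomputable def norm0 (g : ℝ → ℝ) : ℝ≥0∞ := mLeb (Function.support g)

/-- `‖h‖∞`, the essential supremum norm on `(0,∞)`. -/
noncomputable def normInf (h : ℝ → ℝ) : ℝ≥0∞ := eLpNorm h ⊤ mLeb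

/-- `g ∈ L₀(0,∞)`: measurable with support of finite measure. -/
def MemL0 (g : ℝ → ℝ) : Prop := Measurable g ∧ norm0 g < ⊤

/-- `h ∈ L∞(0,∞)`: measurable and essentially bounded. -/
def MemLinf (h : ℝ → ℝ) : Prop := Measurable h ∧ normInf h < ⊤

/-- The K-functional `K_u(f) = inf {‖g‖₀ + u‖h‖∞ : f = g + h, g ∈ L₀, h ∈ L∞}`. -/
noncomputable def Kfun (u : ℝ) (f : ℝ → ℝ) : ℝ≥0∞ :=
  ⨅ (g : ℝ → ℝ) (h : ℝ → ℝ) (_ : MemL0 g) (_ : MemLinf h) (_ : f = g + h),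
    norm0 g + ENNReal.ofReal u * normInf h

/-- The decreasing rearrangement `μ(t; f) = inf {s ≥ 0 : d_f(s) ≤ t}`. -/
noncomputable def rearr (f : ℝ → ℝ) (t : ℝ) : ℝ :=
  sInf {s : ℝ | 0 ≤ s ∧ distFun f s ≤ ENNReal.ofReal t}

/-- The Δ-norm `‖f‖_S = inf_{s>0} [s + d_f(s)]`. -/
noncomputable def normS (f : ℝ → ℝ) : ℝ≥0∞ :=
  ⨅ (s : ℝ) (_ : 0 < s), ENNReal.ofReal s + distFun f s

open scoped Topology

/-!
A splitting `f = g + h` with `‖g‖₀ + u‖h‖∞ < min δ (u ε)` forces `d_f(ε) < δ`, while cutting `f` at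
height `s` gives `K_u(f) ≤ d_f(s) + u s`. Hence `K_u`-convergence is convergence in measure on
`(0,∞)`, and the theorem reduces to completeness of convergence in measure: a subsequence whose
consecutive increments exceed `2⁻ʲ` only on sets of measure `≤ 2⁻ʲ` converges a.e. by
Borel–Cantelli, uniformly off the tails of those sets, and a Cauchy sequence with a convergent
subsequence converges. The limit lies in `S(0,∞)` because it differs from some `f n` by more
than `1` only on a set of finite measure.
-/

namespace MeasureTheory

variable {α E : Type*} {m : MeasurableSpace α} {μ : Measure α} [PseudoEMetricSpace E]

def CauchyInMeasure (μ : Measure α) (f : ℕ → α → E) : Prop :=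
  ∀ ε : ℝ≥0∞, 0 < ε → ∀ δ : ℝ≥0∞, 0 < δ →
    ∃ N, ∀ n ≥ N, ∀ k ≥ N, μ {x | ε ≤ edist (f n x) (f k x)} < δ

lemma setOf_le_edist_subset_union (a b c : α → E) (ε : ℝ≥0∞) :
    {x | ε ≤ edist (a x) (c x)} ⊆
      {x | ε / 2 ≤ edist (a x) (b x)} ∪ {x | ε / 2 ≤ edist (b x) (c x)} := by
  intro x hx
  by_contra h
  simp only [mem_union, mem_ofPred_eq, not_or, not_le] at h
  exact (hx.trans (edist_triangle _ _ _)).not_gt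
    (ENNReal.add_halves ε ▸ ENNReal.add_lt_add h.1 h.2)

lemma CauchyInMeasure.exists_strictMono_measure_lt {f : ℕ → α → E}
    (hf : CauchyInMeasure μ f) : ∃ ns : ℕ → ℕ, StrictMono ns ∧
      ∀ j, μ {x | 2⁻¹ ^ j ≤ edist (f (ns j) x) (f (ns (j + 1)) x)} < 2⁻¹ ^ j := by
  have hpos (j : ℕ) : (0 : ℝ≥0∞) < 2⁻¹ ^ j := ENNReal.pow_pos (by simp) j
  choose N hN using fun j => hf _ (hpos j) _ (hpos j)
  obtain ⟨ns, hmono, hns⟩ :=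
    extraction_forall_of_eventually' (P := fun j k => N j ≤ k) fun j => ⟨N j, fun _ => id⟩
  exact ⟨ns, hmono, fun j => hN j _ (hns j) _ ((hns j).trans (hmono j.lt_succ_self).le)⟩

section InvTwoPow

variable {u : ℕ → E} {j : ℕ}

lemma edist_shift_le_geometric (hu : ∀ i ≥ j, edist (u i) (u (i + 1)) ≤ 2⁻¹ ^ i) (i : ℕ) :
    edist (u (i + j)) (u (i + 1 + j)) ≤ 2⁻¹ ^ j * 2⁻¹ ^ i := by
  rw [← pow_add, add_comm j, add_right_comm]
  exact hu _ (Nat.le_add_left j i)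

lemma cauchySeq_of_edist_le_inv_two_pow (hu : ∀ i ≥ j, edist (u i) (u (i + 1)) ≤ 2⁻¹ ^ i) :
    CauchySeq u :=
  (cauchySeq_shift j).1 <| cauchySeq_of_edist_le_geometric 2⁻¹ (2⁻¹ ^ j) (by simp)
    (by simp) (edist_shift_le_geometric hu)

lemma edist_le_of_edist_le_inv_two_pow_of_tendsto
    (hu : ∀ i ≥ j, edist (u i) (u (i + 1)) ≤ 2⁻¹ ^ i) {a : E} (ha : Tendsto u atTop (𝓝 a)) :
    edist (u j) a ≤ 2 * 2⁻¹ ^ j := by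
  have := edist_le_of_edist_le_geometric_of_tendsto₀ 2⁻¹ (2⁻¹ ^ j)
    (edist_shift_le_geometric hu) ((tendsto_add_atTop_iff_nat j).2 ha)
  rwa [zero_add, ENNReal.one_sub_inv_two, div_eq_mul_inv, inv_inv, mul_comm] at this

end InvTwoPow

lemma measure_iUnion_add_le_of_le_inv_two_pow {s : ℕ → Set α} (hs : ∀ i, μ (s i) ≤ 2⁻¹ ^ i)
    (j : ℕ) : μ (⋃ i, s (i + j)) ≤ 2 * 2⁻¹ ^ j :=
  calc μ (⋃ i, s (i + j)) ≤ ∑' i, μ (s (i + j)) := measure_iUnion_le _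
    _ ≤ ∑' i, 2⁻¹ ^ j * 2⁻¹ ^ i := ENNReal.tsum_le_tsum fun i => by
        rw [← pow_add, add_comm j]; exact hs _
    _ = 2 * 2⁻¹ ^ j := by rw [ENNReal.tsum_mul_left, ENNReal.tsum_geometric_two, mul_comm]

theorem exists_tendstoInMeasure_of_measure_le_inv_two_pow [CompleteSpace E] [MeasurableSpace E]
    [BorelSpace E] {F : ℕ → α → E} (hF : ∀ j, AEMeasurable (F j) μ)
    (h : ∀ j, μ {x | 2⁻¹ ^ j ≤ edist (F j x) (F (j + 1) x)} ≤ 2⁻¹ ^ j) :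
    ∃ g, Measurable g ∧ TendstoInMeasure μ F atTop g := by
  set B : ℕ → Set α := fun j => {x | 2⁻¹ ^ j ≤ edist (F j x) (F (j + 1) x)}
  have hgeom {x : α} {j : ℕ} (hx : ∀ i ≥ j, x ∉ B i) :
      ∀ i ≥ j, edist (F i x) (F (i + 1) x) ≤ 2⁻¹ ^ i :=
    fun i hi => (not_le.1 (hx i hi)).le
  have hsum : ∑' j, μ (B j) ≠ ∞ :=
    ne_top_of_le_ne_top (by simp) (ENNReal.tsum_le_tsum h)
  have hae : ∀ᵐ x ∂μ, ∃ l, Tendsto (fun j => F j x) atTop (𝓝 l) := by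
    filter_upwards [ae_eventually_notMem hsum] with x hx
    obtain ⟨j, hj⟩ := eventually_atTop.1 hx
    exact cauchySeq_tendsto_of_complete (cauchySeq_of_edist_le_inv_two_pow (hgeom hj))
  obtain ⟨g, hg, hFg⟩ := measurable_limit_of_tendsto_metrizable_ae hF hae
  refine ⟨g, hg, fun ε hε => ?_⟩
  have htwo : Tendsto (fun j : ℕ => 2 * (2⁻¹ : ℝ≥0∞) ^ j) atTop (𝓝 0) := by
    simpa using ENNReal.Tendsto.const_mul
      (ENNReal.tendsto_pow_atTop_nhds_zero_of_lt_one (by simp)) (Or.inr ENNReal.ofNat_ne_top)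
  refine tendsto_of_tendsto_of_tendsto_of_le_of_le' tendsto_const_nhds htwo
    (Eventually.of_forall fun _ => zero_le) ?_
  filter_upwards [htwo.eventually (gt_mem_nhds hε)] with j hj
  refine (measure_mono_ae (hFg.mono fun x hlim hxε => ?_)).trans
    (measure_iUnion_add_le_of_le_inv_two_pow h j)
  by_contra hxU
  have hxB : ∀ i ≥ j, x ∉ B i := fun i hi hxi =>
    hxU (mem_iUnion.2 ⟨i - j, by rwa [Nat.sub_add_cancel hi]⟩)
  exact (edist_le_of_edist_le_inv_two_pow_of_tendsto (hgeom hxB) hlim).not_gt (hj.trans_le hxε)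

theorem CauchyInMeasure.tendstoInMeasure_of_subseq {f : ℕ → α → E} {g : α → E}
    (hf : CauchyInMeasure μ f) {ns : ℕ → ℕ} (hns : StrictMono ns)
    (hg : TendstoInMeasure μ (fun j => f (ns j)) atTop g) : TendstoInMeasure μ f atTop g := by
  intro ε hε
  refine ENNReal.tendsto_atTop_zero.2 fun δ hδ => ?_
  obtain ⟨N, hN⟩ := hf (ε / 2) (ENNReal.half_pos hε.ne') (δ / 2) (ENNReal.half_pos hδ.ne')
  obtain ⟨j, hjN, hj⟩ := ((hns.tendsto_atTop.eventually_ge_atTop N).and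
    ((hg _ (ENNReal.half_pos hε.ne')).eventually
      (eventually_le_nhds (ENNReal.half_pos hδ.ne')))).exists
  refine ⟨N, fun n hn => ?_⟩
  calc μ {x | ε ≤ edist (f n x) (g x)}
      ≤ μ {x | ε / 2 ≤ edist (f n x) (f (ns j) x)} + μ {x | ε / 2 ≤ edist (f (ns j) x) (g x)} :=
        (measure_mono (setOf_le_edist_subset_union _ _ _ ε)).trans (measure_union_le _ _)
    _ ≤ δ / 2 + δ / 2 := add_le_add (hN n hn _ hjN).le hj
    _ = δ := ENNReal.add_halves δ

theorem CauchyInMeasure.exists_tendstoInMeasure [CompleteSpace E] [MeasurableSpace E]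
    [BorelSpace E] {f : ℕ → α → E} (hf : CauchyInMeasure μ f)
    (hm : ∀ n, AEMeasurable (f n) μ) : ∃ g, Measurable g ∧ TendstoInMeasure μ f atTop g := by
  obtain ⟨ns, hns, hfast⟩ := hf.exists_strictMono_measure_lt
  obtain ⟨g, hg, hfg⟩ :=
    exists_tendstoInMeasure_of_measure_le_inv_two_pow (fun j => hm (ns j)) fun j => (hfast j).le
  exact ⟨g, hg, hf.tendstoInMeasure_of_subseq hns hfg⟩

end MeasureTheory

lemma distFun_add_le (f g : ℝ → ℝ) (a b : ℝ) :
    distFun (f + g) (a + b) ≤ distFun f a + distFun g b := by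
  refine (measure_mono fun t ht => ?_).trans (measure_union_le _ _)
  by_contra h
  simp only [mem_union, mem_ofPred_eq, not_or, not_lt] at h
  exact (not_le.2 ht) ((abs_add_le _ _).trans (add_le_add h.1 h.2))

lemma distFun_sub_le_measure_le_edist (f g : ℝ → ℝ) (s : ℝ) :
    distFun (f - g) s ≤ mLeb {t | ENNReal.ofReal s ≤ edist (f t) (g t)} :=
  measure_mono fun t (ht : s < |f t - g t|) => by
    rw [mem_ofPred_eq, edist_dist, Real.dist_eq]
    exact ENNReal.ofReal_le_ofReal ht.le

lemma measure_le_edist_le_distFun_sub {f g : ℝ → ℝ} {s : ℝ} {ε : ℝ≥0∞}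
    (hs : ENNReal.ofReal s < ε) : mLeb {t | ε ≤ edist (f t) (g t)} ≤ distFun (f - g) s :=
  measure_mono fun t ht => by
    have := hs.trans_le ht
    rw [edist_dist, Real.dist_eq, ENNReal.ofReal_lt_ofReal_iff'] at this
    exact this.1

lemma distFun_le_norm0_of_normInf_le {f g h : ℝ → ℝ} (hfgh : f = g + h) {ε : ℝ} (hε : 0 ≤ ε)
    (hh : normInf h ≤ ENNReal.ofReal ε) : distFun f ε ≤ norm0 g := by
  rw [normInf, eLpNorm_exponent_top] at hh
  refine measure_mono_ae ((enorm_ae_le_eLpNormEssSup h mLeb).mono fun t ht hft hgt => ?_)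
  rw [Real.enorm_eq_ofReal_abs] at ht
  have hht : |h t| ≤ ε := (ENNReal.ofReal_le_ofReal_iff hε).1 (ht.trans hh)
  have hεh : ε < |g t + h t| := by rw [hfgh] at hft; exact hft
  rw [hgt, zero_add] at hεh
  exact hht.not_gt hεh

lemma Kfun_le {u : ℝ} {f g h : ℝ → ℝ} (hg : MemL0 g) (hh : MemLinf h) (hfgh : f = g + h) :
    Kfun u f ≤ norm0 g + ENNReal.ofReal u * normInf h :=
  iInf₂_le_of_le g h <| iInf₂_le_of_le hg hh <| iInf_le _ hfgh

lemma Kfun_le_distFun_add (u : ℝ) {f : ℝ → ℝ} (hf : Measurable f) {s : ℝ} (hs : 0 ≤ s) :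
    Kfun u f ≤ distFun f s + ENNReal.ofReal u * ENNReal.ofReal s := by
  rcases eq_or_ne (distFun f s) ⊤ with htop | hfin
  · simp [htop]
  set A := {t | s < |f t|}
  have hA : MeasurableSet A := measurableSet_lt measurable_const hf.abs
  have hsupp : norm0 (A.indicator f) ≤ distFun f s :=
    measure_mono support_indicator_subset
  have hbdd : normInf (Aᶜ.indicator f) ≤ ENNReal.ofReal s := by
    rw [normInf, eLpNorm_exponent_top]
    refine eLpNormEssSup_le_of_ae_bound (ae_of_all _ fun t => ?_)
    by_cases ht : t ∈ A
    · simp [ht, hs]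
    · rw [indicator_of_mem (mem_compl ht), Real.norm_eq_abs]
      exact not_lt.1 ht
  calc Kfun u f ≤ norm0 (A.indicator f) + ENNReal.ofReal u * normInf (Aᶜ.indicator f) :=
        Kfun_le ⟨hf.indicator hA, hsupp.trans_lt hfin.lt_top⟩
          ⟨hf.indicator hA.compl, hbdd.trans_lt ENNReal.ofReal_lt_top⟩
          (A.indicator_self_add_compl f).symm
    _ ≤ distFun f s + ENNReal.ofReal u * ENNReal.ofReal s := by gcongr

lemma distFun_le_Kfun {u ε : ℝ} (hu : 0 < u) (hε : 0 ≤ ε) {f : ℝ → ℝ}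
    (hK : Kfun u f < ENNReal.ofReal u * ENNReal.ofReal ε) : distFun f ε ≤ Kfun u f := by
  refine le_of_forall_gt fun c hc => ?_
  have hK' := lt_min hc hK
  simp only [Kfun, iInf_lt_iff] at hK'
  obtain ⟨g, h, -, -, hfgh, hlt⟩ := hK'
  have hh : normInf h < ENNReal.ofReal ε :=
    (ENNReal.mul_lt_mul_iff_right (by simp [hu]) ENNReal.ofReal_ne_top).1
      (le_add_self.trans_lt (hlt.trans_le (min_le_right _ _)))
  exact (distFun_le_norm0_of_normInf_le hfgh hε hh.le).trans_lt
    (le_self_add.trans_lt (hlt.trans_le (min_le_left _ _)))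

lemma cauchyInMeasure_of_Kfun {u : ℝ} (hu : 0 < u) {f : ℕ → ℝ → ℝ}
    (hcauchy : ∀ ε > (0:ℝ), ∃ N : ℕ, ∀ n ≥ N, ∀ k ≥ N,
      Kfun u (f n - f k) < ENNReal.ofReal ε) :
    CauchyInMeasure mLeb f := by
  intro ε hε δ hδ
  obtain ⟨s, -, hs, hsε⟩ := ENNReal.lt_iff_exists_real_btwn.1 hε
  obtain ⟨η, -, hη, hηδ⟩ := ENNReal.lt_iff_exists_real_btwn.1
    (lt_min hδ (ENNReal.mul_pos (ENNReal.ofReal_pos.2 hu).ne' hs.ne'))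
  obtain ⟨N, hN⟩ := hcauchy η (ENNReal.ofReal_pos.1 hη)
  refine ⟨N, fun n hn k hk => ?_⟩
  have hK := (hN n hn k hk).trans hηδ
  calc mLeb {x | ε ≤ edist (f n x) (f k x)} ≤ distFun (f n - f k) s :=
        measure_le_edist_le_distFun_sub hsε
    _ ≤ Kfun u (f n - f k) :=
        distFun_le_Kfun hu (ENNReal.ofReal_pos.1 hs).le (hK.trans_le (min_le_right _ _))
    _ < δ := hK.trans_le (min_le_left _ _)

lemma memS_of_tendstoInMeasure {f : ℕ → ℝ → ℝ} {g : ℝ → ℝ} (hf : ∀ n, MemS (f n))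
    (hg : Measurable g) (hfg : TendstoInMeasure mLeb f atTop g) : MemS g := by
  obtain ⟨n, hn⟩ := ((hfg 1 one_pos).eventually (gt_mem_nhds ENNReal.zero_lt_top)).exists
  obtain ⟨s, hs, hfin⟩ := (hf n).2
  refine ⟨hg, s + 1, by positivity, ?_⟩
  have hgn : distFun (g - f n) 1 < ⊤ := by
    refine (distFun_sub_le_measure_le_edist _ _ _).trans_lt ?_
    simpa only [ENNReal.ofReal_one, edist_comm] using hn
  calc distFun g (s + 1) = distFun (f n + (g - f n)) (s + 1) := by rw [add_sub_cancel]
    _ ≤ distFun (f n) s + distFun (g - f n) 1 := distFun_add_le _ _ _ _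
    _ < ⊤ := ENNReal.add_lt_top.2 ⟨hfin, hgn⟩

lemma tendsto_Kfun_of_tendstoInMeasure (u : ℝ) {f : ℕ → ℝ → ℝ} {g : ℝ → ℝ}
    (hf : ∀ n, Measurable (f n)) (hg : Measurable g) (hfg : TendstoInMeasure mLeb f atTop g) :
    Tendsto (fun n => Kfun u (f n - g)) atTop (𝓝 0) := by
  refine ENNReal.tendsto_nhds_zero.2 fun ε hε => ?_
  have hsmall : Tendsto (fun a : ℝ => ENNReal.ofReal a * (1 + ENNReal.ofReal u)) (𝓝[>] 0) (𝓝 0) := by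
    simpa using ENNReal.Tendsto.mul_const
      ((ENNReal.continuous_ofReal.tendsto' 0 0 ENNReal.ofReal_zero).mono_left nhdsWithin_le_nhds)
      (Or.inr (ENNReal.add_ne_top.2 ⟨ENNReal.one_ne_top, ENNReal.ofReal_ne_top⟩))
  obtain ⟨a, ha, haε⟩ :=
    (eventually_mem_nhdsWithin.and (hsmall.eventually (eventually_le_nhds hε))).exists
  have ha' : 0 < ENNReal.ofReal a := ENNReal.ofReal_pos.2 ha
  filter_upwards [(hfg _ ha').eventually (eventually_le_nhds ha')] with n hn
  calc Kfun u (f n - g) ≤ distFun (f n - g) a + ENNReal.ofReal u * ENNReal.ofReal a :=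
        Kfun_le_distFun_add u ((hf n).sub hg) (le_of_lt ha)
    _ ≤ ENNReal.ofReal a + ENNReal.ofReal u * ENNReal.ofReal a := by
        gcongr; exact (distFun_sub_le_measure_le_edist _ _ _).trans hn
    _ = ENNReal.ofReal a * (1 + ENNReal.ofReal u) := by ring
    _ ≤ ε := haε

/-- `S(0,∞)` is complete with respect to `K_u` for any fixed `u > 0`:
every Cauchy sequence has a limit in `S(0,∞)`. -/
theorem stmt5 (u : ℝ) (hu : 0 < u) (f : ℕ → ℝ → ℝ) (hf : ∀ n, MemS (f n))
    (hcauchy : ∀ ε > (0:ℝ), ∃ N : ℕ, ∀ n ≥ N, ∀ k ≥ N,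
      Kfun u (f n - f k) < ENNReal.ofReal ε) :
    ∃ g : ℝ → ℝ, MemS g ∧ Tendsto (fun n => Kfun u (f n - g)) atTop (nhds 0) := by
  obtain ⟨g, hg, hfg⟩ :=
    (cauchyInMeasure_of_Kfun hu hcauchy).exists_tendstoInMeasure fun n => (hf n).1.aemeasurable
  exact ⟨g, memS_of_tendstoInMeasure hf hg hfg,
    tendsto_Kfun_of_tendstoInMeasure u (fun n => (hf n).1) hg hfg⟩
end

section
/- Let T be an additive map sending measurable functions on (0,∞) to measurable functions (T(f+g) = Tf + Tg), and suppose there are constants M₀, M₁ > 0 such that m(supp Tf) ≤ M₀·m(supp f) for every f ∈ L₀(0,∞) and ‖Tf‖∞ ≤ M₁‖f‖∞ for every f ∈ L∞(0,∞). Then for every f ∈ S(0,∞) and every t > 0, the decreasing rearrangements satisfy μ(M₀·t; Tf) ≤ M₁·μ(t; f). -/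
open MeasureTheory Filter Set
open scoped ENNReal NNReal

open Topology

/-!
Truncating `f` at height `μ(t; f)` splits it as `f = g + h` with `m(supp g) ≤ t` and
`‖h‖∞ ≤ μ(t; f)`. By additivity `Tf = Tg + Th`, where `m(supp Tg) ≤ M₀ t` and
`|Th| ≤ M₁ μ(t; f)` almost everywhere, so `|Tf| > M₁ μ(t; f)` only on the support of `Tg`,
a set of measure at most `M₀ t`.
-/

/-- Right continuity of `distFun f`. -/
lemma distFun_le_of_tendsto {f : ℝ → ℝ} {u : ℕ → ℝ} {s : ℝ} {c : ℝ≥0∞} (hu : Antitone u)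
    (hlim : Tendsto u atTop (𝓝 s)) (hle : ∀ n, distFun f (u n) ≤ c) : distFun f s ≤ c := by
  have hunion : {x | s < |f x|} = ⋃ n, {x | u n < |f x|} := by
    ext x
    simp only [mem_ofPred_eq, mem_iUnion]
    exact ⟨fun hx => (hlim.eventually_lt_const hx).exists, fun ⟨n, hn⟩ =>
      lt_of_le_of_lt (hu.le_of_tendsto hlim n) hn⟩
  have hmono : Monotone fun n => {x | u n < |f x|} :=
    fun _ _ hmn _ hx => lt_of_le_of_lt (hu hmn) hx
  rw [distFun, hunion, hmono.measure_iUnion]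
  exact iSup_le hle

lemma MemS.tendsto_distFun_atTop {f : ℝ → ℝ} (hf : MemS f) : Tendsto (distFun f) atTop (𝓝 0) := by
  obtain ⟨hmeas, s₀, -, hfin⟩ := hf
  have hempty : (⋂ s : ℝ, {x | s < |f x|}) = ∅ :=
    eq_empty_of_forall_notMem fun x hx => lt_irrefl |f x| (mem_iInter.1 hx |f x|)
  have := tendsto_measure_iInter_atTop (μ := mLeb) (s := fun s => {x | s < |f x|})
    (fun s => (measurableSet_lt measurable_const hmeas.abs).nullMeasurableSet)
    (fun _ _ hss' _ hx => lt_of_le_of_lt hss' hx) ⟨s₀, hfin.ne⟩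
  rwa [hempty, measure_empty] at this

lemma MemS.exists_distFun_le {f : ℝ → ℝ} (hf : MemS f) {t : ℝ} (ht : 0 < t) :
    ∃ s, 0 ≤ s ∧ distFun f s ≤ ENNReal.ofReal t :=
  ((hf.tendsto_distFun_atTop.eventually_lt_const (ENNReal.ofReal_pos.2 ht)).and
    (eventually_ge_atTop 0)).exists.imp fun _ hs => ⟨hs.2, hs.1.le⟩

lemma rearr_nonneg (f : ℝ → ℝ) (t : ℝ) : 0 ≤ rearr f t :=
  Real.sInf_nonneg fun _ hs => hs.1

lemma rearr_le {f : ℝ → ℝ} {s t : ℝ} (hs : 0 ≤ s) (h : distFun f s ≤ ENNReal.ofReal t) :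
    rearr f t ≤ s :=
  csInf_le ⟨0, fun _ hs => hs.1⟩ ⟨hs, h⟩

/-- The infimum defining `μ(t; f)` is attained. -/
lemma distFun_rearr_le {f : ℝ → ℝ} {t : ℝ} (hne : ∃ s, 0 ≤ s ∧ distFun f s ≤ ENNReal.ofReal t) :
    distFun f (rearr f t) ≤ ENNReal.ofReal t := by
  obtain ⟨u, hu, hlim, hmem⟩ := exists_seq_tendsto_sInf hne ⟨0, fun _ hs => hs.1⟩
  exact distFun_le_of_tendsto hu hlim fun n => (hmem n).2

lemma distFun_add_le_s6 (g h : ℝ → ℝ) (s : ℝ) : distFun (g + h) s ≤ norm0 g + distFun h s := by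
  refine (measure_mono fun x hx => ?_).trans (measure_union_le _ _)
  by_cases hgx : g x = 0
  · exact Or.inr (by simpa [hgx] using hx)
  · exact Or.inl hgx

lemma distFun_eq_zero_of_normInf_le {h : ℝ → ℝ} {s : ℝ} (hs : 0 ≤ s)
    (hh : normInf h ≤ ENNReal.ofReal s) : distFun h s = 0 := by
  refine measure_mono_null (fun x hx => ?_) (meas_eLpNormEssSup_lt (μ := mLeb) (f := h))
  have hx' : ENNReal.ofReal s < ‖h x‖ₑ := by
    rw [← ofReal_norm, Real.norm_eq_abs]
    exact (ENNReal.ofReal_lt_ofReal_iff_of_nonneg hs).2 hx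
  rw [normInf, eLpNorm_exponent_top] at hh
  exact lt_of_le_of_lt hh hx'

def truncate (c : ℝ) (f : ℝ → ℝ) : ℝ → ℝ := fun x => max (min (f x) c) (-c)

lemma Measurable.truncate {f : ℝ → ℝ} (hf : Measurable f) (c : ℝ) : Measurable (truncate c f) :=
  (hf.min measurable_const).max measurable_const

lemma normInf_truncate_le (f : ℝ → ℝ) {c : ℝ} (hc : 0 ≤ c) :
    normInf (truncate c f) ≤ ENNReal.ofReal c := by
  rw [normInf, eLpNorm_exponent_top]
  refine eLpNormEssSup_le_of_ae_bound (Eventually.of_forall fun x => ?_)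
  rw [Real.norm_eq_abs, abs_le]
  exact ⟨le_max_right _ _, max_le (min_le_right _ _) (by linarith)⟩

lemma support_sub_truncate_subset (f : ℝ → ℝ) (c : ℝ) :
    Function.support (f - truncate c f) ⊆ {x | c < |f x|} := by
  intro x hx
  show c < |f x|
  by_contra! hc
  obtain ⟨hlo, hhi⟩ := abs_le.1 hc
  exact hx (by simp [truncate, min_eq_left hhi, max_eq_left hlo])

lemma MemS.exists_eq_add_memL0_memLinf {f : ℝ → ℝ} (hf : MemS f) {t : ℝ} (ht : 0 < t) :
    ∃ g h, MemL0 g ∧ MemLinf h ∧ f = g + h ∧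
      norm0 g ≤ ENNReal.ofReal t ∧ normInf h ≤ ENNReal.ofReal (rearr f t) := by
  have hg : norm0 (f - truncate (rearr f t) f) ≤ ENNReal.ofReal t :=
    (measure_mono (support_sub_truncate_subset f _)).trans
      (distFun_rearr_le (hf.exists_distFun_le ht))
  have hh := normInf_truncate_le f (rearr_nonneg f t)
  exact ⟨_, _, ⟨hf.1.sub (hf.1.truncate _), hg.trans_lt ENNReal.ofReal_lt_top⟩,
    ⟨hf.1.truncate _, hh.trans_lt ENNReal.ofReal_lt_top⟩, (sub_add_cancel _ _).symm, hg, hh⟩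

theorem stmt6_general (T : (ℝ → ℝ) → (ℝ → ℝ))
    (hadd : ∀ f g : ℝ → ℝ, T (f + g) = T f + T g)
    (M₀ M₁ : ℝ) (hM₁ : 0 < M₁)
    (hT0 : ∀ f : ℝ → ℝ, MemL0 f → norm0 (T f) ≤ ENNReal.ofReal M₀ * norm0 f)
    (hTinf : ∀ f : ℝ → ℝ, MemLinf f → normInf (T f) ≤ ENNReal.ofReal M₁ * normInf f)
    (f : ℝ → ℝ) (hf : MemS f) (t : ℝ) (ht : 0 < t) :
    rearr (T f) (M₀ * t) ≤ M₁ * rearr f t := by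
  obtain ⟨g, h, hgL0, hhLinf, rfl, hg, hh⟩ := hf.exists_eq_add_memL0_memLinf ht
  have hμ : 0 ≤ M₁ * rearr (g + h) t := mul_nonneg hM₁.le (rearr_nonneg _ _)
  have hTg : norm0 (T g) ≤ ENNReal.ofReal (M₀ * t) := by
    rw [ENNReal.ofReal_mul' ht.le]
    exact (hT0 g hgL0).trans (by gcongr)
  have hTh : normInf (T h) ≤ ENNReal.ofReal (M₁ * rearr (g + h) t) := by
    rw [ENNReal.ofReal_mul hM₁.le]
    exact (hTinf h hhLinf).trans (by gcongr)
  refine rearr_le hμ ?_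
  calc distFun (T (g + h)) (M₁ * rearr (g + h) t)
      ≤ norm0 (T g) + distFun (T h) (M₁ * rearr (g + h) t) := by
        rw [hadd]; exact distFun_add_le_s6 _ _ _
    _ ≤ ENNReal.ofReal (M₀ * t) := by
        rw [distFun_eq_zero_of_normInf_le hμ hTh, add_zero]; exact hTg

/-- If `T` is additive, maps measurable functions to measurable
functions, and satisfies `m(supp Tf) ≤ M₀·m(supp f)` on `L₀` and
`‖Tf‖∞ ≤ M₁‖f‖∞` on `L∞`, then `μ(M₀·t; Tf) ≤ M₁·μ(t; f)` for all `f ∈ S(0,∞)`, `t > 0`. -/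
theorem stmt6 (T : (ℝ → ℝ) → (ℝ → ℝ))
    (hadd : ∀ f g : ℝ → ℝ, T (f + g) = T f + T g)
    (hmeas : ∀ f : ℝ → ℝ, Measurable f → Measurable (T f))
    (M₀ M₁ : ℝ) (hM₀ : 0 < M₀) (hM₁ : 0 < M₁)
    (hT0 : ∀ f : ℝ → ℝ, MemL0 f → norm0 (T f) ≤ ENNReal.ofReal M₀ * norm0 f)
    (hTinf : ∀ f : ℝ → ℝ, MemLinf f → normInf (T f) ≤ ENNReal.ofReal M₁ * normInf f)
    (f : ℝ → ℝ) (hf : MemS f) (t : ℝ) (ht : 0 < t) :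
    rearr (T f) (M₀ * t) ≤ M₁ * rearr f t :=
  stmt6_general T hadd M₀ M₁ hM₁ hT0 hTinf f hf t ht
end

section
/- Let τ₁, τ₂ > 0 and let k₁ > k₂ > τ₂·k₁/(τ₁+τ₂) > 0. Let a = k₁·χ_{(0,τ₁)} + k₂·χ_{[τ₁, τ₁+τ₂)}. Then for every u > 0, K_u(a) = min(u·k₁, τ₁+τ₂). -/
open MeasureTheory Filter Set
open scoped ENNReal NNReal

/- Both upper bounds come from the trivial splittings `a = a + 0` and `a = 0 + a`. For the lower
bound, off `supp g` we have `f = h`, so `f` exceeds `‖h‖∞` in modulus only on `supp g` up to a null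
set: `‖g‖₀ + u‖h‖∞ ≥ m{|f| > c} + u c` with `c = ‖h‖∞`. For the step function `a` the right-hand
side is at least `u k₁`, `τ₁ + u k₂` or `τ₁ + τ₂` according as `c ≥ k₁`, `k₂ ≤ c < k₁` or `c < k₂`,
and the condition `k₂ > τ₂ k₁ / (τ₁ + τ₂)` is what makes the middle value at least
`min (u k₁) (τ₁ + τ₂)`. -/

lemma mLeb_Ioo_zero (b : ℝ) : mLeb (Ioo 0 b) = ENNReal.ofReal b := by
  rw [mLeb, Measure.restrict_apply measurableSet_Ioo, Ioo_inter_Ioi, Real.volume_Ioo,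
    max_self, sub_zero]

section KFunctional

variable {u : ℝ} {f g h : ℝ → ℝ}

lemma Kfun_le_of_eq_add (hg : MemL0 g) (hh : MemLinf h) (hfgh : f = g + h) :
    Kfun u f ≤ norm0 g + ENNReal.ofReal u * normInf h :=
  iInf_le_of_le g <| iInf_le_of_le h <| iInf_le_of_le hg <| iInf_le_of_le hh <| iInf_le _ hfgh

lemma Kfun_le_norm0 (hf : MemL0 f) : Kfun u f ≤ norm0 f := by
  have h0 : MemLinf 0 := ⟨measurable_const, by simp [normInf]⟩
  simpa [normInf] using Kfun_le_of_eq_add (u := u) hf h0 (add_zero f).symm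

lemma Kfun_le_mul_normInf (hf : MemLinf f) : Kfun u f ≤ ENNReal.ofReal u * normInf f := by
  have h0 : MemL0 0 := ⟨measurable_const, by simp [norm0]⟩
  simpa [norm0] using Kfun_le_of_eq_add (u := u) h0 hf (zero_add f).symm

lemma mLeb_normInf_lt_enorm_le_norm0 (hfgh : f = g + h) :
    mLeb {t | normInf h < ‖f t‖ₑ} ≤ norm0 g := by
  have hae : ∀ᵐ t ∂mLeb, ‖h t‖ₑ ≤ normInf h := by
    rw [normInf, eLpNorm_exponent_top]
    exact enorm_ae_le_eLpNormEssSup h mLeb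
  refine measure_mono_ae ?_
  filter_upwards [hae] with t hht hft
  by_contra hgt
  have hfh : f t = h t := by simp [hfgh, Function.notMem_support.mp hgt]
  exact (hft.trans_le (hfh ▸ hht)).false

lemma le_Kfun_of_forall_le {B : ℝ≥0∞}
    (hB : ∀ c : ℝ≥0∞, B ≤ mLeb {t | c < ‖f t‖ₑ} + ENNReal.ofReal u * c) : B ≤ Kfun u f := by
  simp only [Kfun, le_iInf_iff]
  intro g h _ _ hfgh
  exact (hB (normInf h)).trans (by gcongr; exact mLeb_normInf_lt_enorm_le_norm0 hfgh)

end KFunctional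

noncomputable def twoStep (τ₁ τ₂ k₁ k₂ : ℝ) : ℝ → ℝ :=
  indicator (Ioo 0 τ₁) (fun _ => k₁) + indicator (Ico τ₁ (τ₁ + τ₂)) (fun _ => k₂)

section TwoStep

variable {τ₁ τ₂ k₁ k₂ : ℝ}

lemma measurable_twoStep : Measurable (twoStep τ₁ τ₂ k₁ k₂) :=
  (measurable_const.indicator measurableSet_Ioo).add (measurable_const.indicator measurableSet_Ico)

lemma twoStep_of_mem_Ioo {t : ℝ} (ht : t ∈ Ioo 0 τ₁) : twoStep τ₁ τ₂ k₁ k₂ t = k₁ := by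
  have ht' : t ∉ Ico τ₁ (τ₁ + τ₂) := fun h => h.1.not_gt ht.2
  simp [twoStep, indicator_of_mem ht, indicator_of_notMem ht']

lemma twoStep_of_mem_Ico {t : ℝ} (ht : t ∈ Ico τ₁ (τ₁ + τ₂)) : twoStep τ₁ τ₂ k₁ k₂ t = k₂ := by
  have ht' : t ∉ Ioo 0 τ₁ := fun h => ht.1.not_gt h.2
  simp [twoStep, indicator_of_mem ht, indicator_of_notMem ht']

lemma abs_twoStep_le (hk₂ : 0 ≤ k₂) (h₁ : k₂ ≤ k₁) (t : ℝ) : |twoStep τ₁ τ₂ k₁ k₂ t| ≤ k₁ := by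
  by_cases ht₁ : t ∈ Ioo 0 τ₁
  · rw [twoStep_of_mem_Ioo ht₁, abs_of_nonneg (hk₂.trans h₁)]
  by_cases ht₂ : t ∈ Ico τ₁ (τ₁ + τ₂)
  · rwa [twoStep_of_mem_Ico ht₂, abs_of_nonneg hk₂]
  simpa [twoStep, indicator_of_notMem ht₁, indicator_of_notMem ht₂] using hk₂.trans h₁

lemma support_twoStep_subset (hτ₁ : 0 < τ₁) (hτ₂ : 0 ≤ τ₂) :
    Function.support (twoStep τ₁ τ₂ k₁ k₂) ⊆ Ioo 0 (τ₁ + τ₂) := by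
  intro t ht
  by_contra hnot
  have ht₁ : t ∉ Ioo 0 τ₁ := fun h => hnot ⟨h.1, h.2.trans_le (le_add_of_nonneg_right hτ₂)⟩
  have ht₂ : t ∉ Ico τ₁ (τ₁ + τ₂) := fun h => hnot ⟨hτ₁.trans_le h.1, h.2⟩
  exact ht (by simp [twoStep, indicator_of_notMem ht₁, indicator_of_notMem ht₂])

lemma Ioo_subset_lt_enorm_twoStep {c : ℝ≥0∞} (hc : c < ENNReal.ofReal k₁) :
    Ioo 0 τ₁ ⊆ {t | c < ‖twoStep τ₁ τ₂ k₁ k₂ t‖ₑ} := fun t ht => by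
  simpa [twoStep_of_mem_Ioo ht] using hc.trans_le (Real.ofReal_le_enorm k₁)

lemma Ioo_add_subset_lt_enorm_twoStep {c : ℝ≥0∞} (hc₁ : c < ENNReal.ofReal k₁)
    (hc₂ : c < ENNReal.ofReal k₂) :
    Ioo 0 (τ₁ + τ₂) ⊆ {t | c < ‖twoStep τ₁ τ₂ k₁ k₂ t‖ₑ} := fun t ht => by
  rcases lt_or_ge t τ₁ with htτ | htτ
  · exact Ioo_subset_lt_enorm_twoStep hc₁ ⟨ht.1, htτ⟩
  · simpa [twoStep_of_mem_Ico ⟨htτ, ht.2⟩] using hc₂.trans_le (Real.ofReal_le_enorm k₂)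

lemma min_le_add_mul_of_mul_le (hk₁ : 0 < k₁) (hk₂ : 0 ≤ k₂) (h₁ : k₂ ≤ k₁) {u : ℝ}
    (hk : τ₂ * k₁ ≤ k₂ * (τ₁ + τ₂)) : min (u * k₁) (τ₁ + τ₂) ≤ τ₁ + u * k₂ := by
  rcases le_total (u * k₁) (τ₁ + τ₂) with hle | hle
  · rw [min_eq_left hle]
    nlinarith [mul_le_mul_of_nonneg_right hle (sub_nonneg.2 h₁)]
  · rw [min_eq_right hle]
    nlinarith [mul_le_mul_of_nonneg_left hle hk₂]

lemma ofReal_min_le_Kfun_twoStep (hτ₁ : 0 < τ₁) (hk₁ : 0 < k₁) (hk₂ : 0 ≤ k₂) (h₁ : k₂ ≤ k₁)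
    (hk : τ₂ * k₁ ≤ k₂ * (τ₁ + τ₂)) {u : ℝ} (hu : 0 ≤ u) :
    ENNReal.ofReal (min (u * k₁) (τ₁ + τ₂)) ≤ Kfun u (twoStep τ₁ τ₂ k₁ k₂) := by
  refine le_Kfun_of_forall_le fun c => ?_
  rcases le_or_gt (ENNReal.ofReal k₁) c with hc₁ | hc₁
  · calc ENNReal.ofReal (min (u * k₁) (τ₁ + τ₂))
        ≤ ENNReal.ofReal u * ENNReal.ofReal k₁ := by
          rw [← ENNReal.ofReal_mul hu]; exact ENNReal.ofReal_le_ofReal (min_le_left _ _)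
      _ ≤ _ := le_add_left (by gcongr)
  rcases le_or_gt (ENNReal.ofReal k₂) c with hc₂ | hc₂
  · calc ENNReal.ofReal (min (u * k₁) (τ₁ + τ₂))
        ≤ ENNReal.ofReal τ₁ + ENNReal.ofReal u * ENNReal.ofReal k₂ := by
          rw [← ENNReal.ofReal_mul hu, ← ENNReal.ofReal_add hτ₁.le (by positivity)]
          exact ENNReal.ofReal_le_ofReal (min_le_add_mul_of_mul_le hk₁ hk₂ h₁ hk)
      _ ≤ _ := by
          gcongr
          rw [← mLeb_Ioo_zero]
          exact measure_mono (Ioo_subset_lt_enorm_twoStep hc₁)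
  · calc ENNReal.ofReal (min (u * k₁) (τ₁ + τ₂))
        ≤ mLeb (Ioo 0 (τ₁ + τ₂)) := by
          rw [mLeb_Ioo_zero]; exact ENNReal.ofReal_le_ofReal (min_le_right _ _)
      _ ≤ _ := le_add_right (measure_mono (Ioo_add_subset_lt_enorm_twoStep hc₁ hc₂))

lemma Kfun_twoStep_le_add (hτ₁ : 0 < τ₁) (hτ₂ : 0 ≤ τ₂) (u : ℝ) :
    Kfun u (twoStep τ₁ τ₂ k₁ k₂) ≤ ENNReal.ofReal (τ₁ + τ₂) := by
  have hnorm : norm0 (twoStep τ₁ τ₂ k₁ k₂) ≤ ENNReal.ofReal (τ₁ + τ₂) :=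
    (measure_mono (support_twoStep_subset hτ₁ hτ₂)).trans_eq (mLeb_Ioo_zero _)
  exact (Kfun_le_norm0 ⟨measurable_twoStep, hnorm.trans_lt ENNReal.ofReal_lt_top⟩).trans hnorm

lemma Kfun_twoStep_le_mul (hk₂ : 0 ≤ k₂) (h₁ : k₂ ≤ k₁) {u : ℝ} (hu : 0 ≤ u) :
    Kfun u (twoStep τ₁ τ₂ k₁ k₂) ≤ ENNReal.ofReal (u * k₁) := by
  have hnorm : normInf (twoStep τ₁ τ₂ k₁ k₂) ≤ ENNReal.ofReal k₁ := by
    rw [normInf, eLpNorm_exponent_top]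
    exact eLpNormEssSup_le_of_ae_bound (.of_forall (abs_twoStep_le hk₂ h₁))
  calc Kfun u (twoStep τ₁ τ₂ k₁ k₂)
      ≤ ENNReal.ofReal u * normInf (twoStep τ₁ τ₂ k₁ k₂) :=
        Kfun_le_mul_normInf ⟨measurable_twoStep, hnorm.trans_lt ENNReal.ofReal_lt_top⟩
    _ ≤ ENNReal.ofReal (u * k₁) := by rw [ENNReal.ofReal_mul hu]; gcongr

end TwoStep

/-- for `a = k₁·χ_{(0,τ₁)} + k₂·χ_{[τ₁,τ₁+τ₂)}` with
`k₁ > k₂ > τ₂·k₁/(τ₁+τ₂) > 0`, one has `K_u(a) = min(u·k₁, τ₁+τ₂)` for every `u > 0`. -/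
theorem stmt10 (τ₁ τ₂ k₁ k₂ : ℝ) (hτ₁ : 0 < τ₁) (hτ₂ : 0 < τ₂)
    (h₁ : k₂ < k₁) (h₂ : τ₂ * k₁ / (τ₁ + τ₂) < k₂) (h₃ : 0 < τ₂ * k₁ / (τ₁ + τ₂))
    (u : ℝ) (hu : 0 < u) :
    Kfun u (Set.indicator (Set.Ioo (0:ℝ) τ₁) (fun _ => k₁) +
            Set.indicator (Set.Ico τ₁ (τ₁ + τ₂)) (fun _ => k₂)) =
      ENNReal.ofReal (min (u * k₁) (τ₁ + τ₂)) := by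
  have hτ : 0 < τ₁ + τ₂ := by linarith
  have hk₁ : 0 < k₁ := pos_of_mul_pos_right ((div_pos_iff_of_pos_right hτ).mp h₃) hτ₂.le
  have hk₂ : 0 < k₂ := h₃.trans h₂
  have hk : τ₂ * k₁ ≤ k₂ * (τ₁ + τ₂) := ((div_lt_iff₀ hτ).mp h₂).le
  change Kfun u (twoStep τ₁ τ₂ k₁ k₂) = _
  refine le_antisymm ?_ (ofReal_min_le_Kfun_twoStep hτ₁ hk₁ hk₂.le h₁.le hk hu.le)
  rw [ENNReal.ofReal_min]
  exact le_min (Kfun_twoStep_le_mul hk₂.le h₁.le hu.le) (Kfun_twoStep_le_add hτ₁ hτ₂.le u)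
end
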